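/- For all θ with 0 < θ ≤ 2π/7, the function (cos(θ/4 − β) − sin β)/(cos(θ/2 − β) − sin(3θ/4 − β)) is decreasing in β for 0 ≤ β ≤ θ/4, so it is maximized at β = 0 where it equals cos(θ/4)/(cos(θ/2) − sin(3θ/4)). -/

import Mathlib

/-!
Both differences are of the form `cos a - sin b = cos a - cos (π/2 - b)`, which sum-to-product
factors; numerator and denominator then share the factor `2 sin (π/4 - θ/8) > 0`, and the
quotient reduces to `sin (π/4 + θ/8 - β) / sin (π/4 - 5θ/8 + β)`. For `θ ≤ 2π/7` both arguments
stay in `(0, π/2]` when `0 ≤ β ≤ θ/4`, so the numerator is positive and decreasing while the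
denominator is positive and increasing.
-/

open Real

theorem AntitoneOn.div_of_monotoneOn {α 𝕜 : Type*} [Preorder α] [Field 𝕜] [LinearOrder 𝕜]
    [IsStrictOrderedRing 𝕜] {f g : α → 𝕜} {s : Set α} (hf : AntitoneOn f s)
    (hg : MonotoneOn g s) (hf₀ : ∀ x ∈ s, 0 ≤ f x) (hg₀ : ∀ x ∈ s, 0 < g x) :
    AntitoneOn (fun x => f x / g x) s :=
  fun x hx _ hy hxy => div_le_div₀ (hf₀ x hx) (hf hx hy hxy) (hg₀ x hx) (hg hx hy hxy)

theorem Real.cos_sub_sin (a b : ℝ) :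
    cos a - sin b = 2 * sin (π / 4 - (a + b) / 2) * sin (π / 4 + (a - b) / 2) := by
  have hsum : (a + (π / 2 - b)) / 2 = π / 4 + (a - b) / 2 := by ring
  have hdiff : (a - (π / 2 - b)) / 2 = -(π / 4 - (a + b) / 2) := by ring
  rw [← cos_pi_div_two_sub b, cos_sub_cos, hsum, hdiff, sin_neg]
  ring

theorem cos_sub_sin_div_cos_sub_sin (θ β : ℝ) (hsin : sin (π / 4 - θ / 8) ≠ 0) :
    (cos (θ / 4 - β) - sin β) / (cos (θ / 2 - β) - sin (3 * θ / 4 - β)) =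
      sin (π / 4 + θ / 8 - β) / sin (π / 4 - 5 * θ / 8 + β) := by
  have hnum : cos (θ / 4 - β) - sin β = 2 * sin (π / 4 - θ / 8) * sin (π / 4 + θ / 8 - β) := by
    rw [cos_sub_sin]; ring_nf
  have hden : cos (θ / 2 - β) - sin (3 * θ / 4 - β) =
      2 * sin (π / 4 - θ / 8) * sin (π / 4 - 5 * θ / 8 + β) := by
    rw [cos_sub_sin]; ring_nf
  rw [hnum, hden, mul_div_mul_left _ _ (mul_ne_zero two_ne_zero hsin)]

theorem stmt10 (θ : ℝ) (hθ0 : 0 < θ) (hθ : θ ≤ 2 * π / 7) :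
    AntitoneOn (fun β : ℝ =>
        (Real.cos (θ / 4 - β) - Real.sin β) /
          (Real.cos (θ / 2 - β) - Real.sin (3 * θ / 4 - β)))
      (Set.Icc 0 (θ / 4)) ∧
    (∀ β ∈ Set.Icc (0 : ℝ) (θ / 4),
      (Real.cos (θ / 4 - β) - Real.sin β) /
          (Real.cos (θ / 2 - β) - Real.sin (3 * θ / 4 - β)) ≤
        Real.cos (θ / 4) / (Real.cos (θ / 2) - Real.sin (3 * θ / 4))) ∧
    (Real.cos (θ / 4 - 0) - Real.sin 0) /
        (Real.cos (θ / 2 - 0) - Real.sin (3 * θ / 4 - 0)) =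
      Real.cos (θ / 4) / (Real.cos (θ / 2) - Real.sin (3 * θ / 4)) := by
  have hπ := pi_pos
  have hfactor : sin (π / 4 - θ / 8) ≠ 0 :=
    (sin_pos_of_pos_of_lt_pi (by linarith) (by linarith)).ne'
  have hreduced : AntitoneOn (fun β => sin (π / 4 + θ / 8 - β) / sin (π / 4 - 5 * θ / 8 + β))
      (Set.Icc 0 (θ / 4)) := by
    refine AntitoneOn.div_of_monotoneOn ?_ ?_ ?_ ?_
    · rintro x ⟨hx0, hx1⟩ y ⟨hy0, hy1⟩ hxy
      exact sin_le_sin_of_le_of_le_pi_div_two (by linarith) (by linarith) (by linarith)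
    · rintro x ⟨hx0, hx1⟩ y ⟨hy0, hy1⟩ hxy
      exact sin_le_sin_of_le_of_le_pi_div_two (by linarith) (by linarith) (by linarith)
    · rintro x ⟨hx0, hx1⟩
      exact (sin_pos_of_pos_of_lt_pi (by linarith) (by linarith)).le
    · rintro x ⟨hx0, hx1⟩
      exact sin_pos_of_pos_of_lt_pi (by linarith) (by linarith)
  have hanti := hreduced.congr fun β _ => (cos_sub_sin_div_cos_sub_sin θ β hfactor).symm
  refine ⟨hanti, fun β hβ => ?_, by simp⟩
  simpa using hanti ⟨le_rfl, by linarith⟩ hβ hβ.1
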